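/- Let g, N ∈ ℕ with 2g + N ≥ 3 and let Γ be a connected trivalent N-marked graph of genus g. Then |Ver| ≤ 2(g−1) + N, |Edg| ≤ 3(g−1) + N, and Σ_{v∈Ver} ((γ(v)−1) + |F̄_v(Γ)|) ≤ 4(g−1) + 2N. -/

import Mathlib

/-- An `N`-marked graph: finite sets of vertices (`Fin nv`) and flags (`Fin nf`),
a genus function `γ`, an attaching map `η` on markings and flags, and a
partition `Edg` of the flags into two-element subsets (the edges). -/
structure MarkedGraph (N : ℕ) where
  nv : ℕ
  nf : ℕ
  γ : Fin nv → ℕ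
  η : Fin N ⊕ Fin nf → Fin nv
  Edg : Finset (Finset (Fin nf))
  card_eq_two : ∀ e ∈ Edg, e.card = 2
  partition : ∀ f : Fin nf, ∃! e, e ∈ Edg ∧ f ∈ e

namespace MarkedGraph

variable {N : ℕ} (Γ : MarkedGraph N)

/-- `F̄_v(Γ) = η⁻¹(v)`, the markings and flags at a vertex `v`. -/
def flagsAt (v : Fin Γ.nv) : Finset (Fin N ⊕ Fin Γ.nf) :=
  Finset.univ.filter fun x => Γ.η x = v

/-- Two vertices are adjacent if some edge has flags at both of them. -/
def Adj (v v' : Fin Γ.nv) : Prop :=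
  ∃ e ∈ Γ.Edg, ∃ f ∈ e, ∃ f' ∈ e, Γ.η (Sum.inr f) = v ∧ Γ.η (Sum.inr f') = v'

/-- Any two distinct vertices are joined by a chain of edges. -/
def Connected : Prop :=
  ∀ v v' : Fin Γ.nv, v ≠ v' → Relation.ReflTransGen Γ.Adj v v'

/-- `val_Γ(v) = 2(γ(v)−1) + |F̄_v(Γ)| > 0` for every vertex `v`. -/
def Trivalent : Prop :=
  ∀ v : Fin Γ.nv, 3 ≤ 2 * Γ.γ v + (Γ.flagsAt v).card

/-- The arithmetic genus `1 − |Ver| + |Edg| + Σ_v γ(v)` equals `g`. -/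
def HasGenus (g : ℕ) : Prop :=
  1 - (Γ.nv : ℤ) + (Γ.Edg.card : ℤ) + ∑ v : Fin Γ.nv, (Γ.γ v : ℤ) = (g : ℤ)

end MarkedGraph

/-!
Every flag lies on exactly one edge, so `∑_v |F̄_v| = N + 2|Edg|`, while trivalence gives
`3 ≤ 2γ(v) + |F̄_v|` at every vertex. Summing the latter and eliminating `∑_v γ(v)` with the
genus formula leaves `|Ver| ≤ 2(g-1) + N`; the other two bounds are then linear consequences
of the genus formula and `∑_v γ(v) ≥ 0`.
-/

namespace MarkedGraph

variable {N : ℕ} (Γ : MarkedGraph N)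

theorem sum_card_flagsAt_eq_add_nf : ∑ v, (Γ.flagsAt v).card = N + Γ.nf := by
  simpa [flagsAt] using
    (Finset.card_eq_sum_card_fiberwise (f := Γ.η) (s := Finset.univ) (t := Finset.univ)
      fun x _ => Finset.mem_coe.2 (Finset.mem_univ (Γ.η x))).symm

theorem biUnion_edg_eq_univ : Γ.Edg.biUnion id = Finset.univ := by
  ext f
  obtain ⟨e, ⟨he, hf⟩, -⟩ := Γ.partition f
  simpa using ⟨e, he, hf⟩

theorem pairwiseDisjoint_edg : (Γ.Edg : Set (Finset (Fin Γ.nf))).PairwiseDisjoint id := by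
  intro e he e' he' hne
  rw [Function.onFun, Finset.disjoint_left]
  intro f hf hf'
  obtain ⟨u, -, huniq⟩ := Γ.partition f
  exact hne ((huniq e ⟨he, hf⟩).trans (huniq e' ⟨he', hf'⟩).symm)

theorem nf_eq_two_mul_card_edg : Γ.nf = 2 * Γ.Edg.card := by
  have h := Finset.card_biUnion Γ.pairwiseDisjoint_edg
  rw [Γ.biUnion_edg_eq_univ, Finset.card_univ, Fintype.card_fin] at h
  rw [mul_comm, ← Finset.sum_const_nat Γ.card_eq_two]
  exact h

theorem sum_card_flagsAt : ∑ v, (Γ.flagsAt v).card = N + 2 * Γ.Edg.card := by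
  rw [sum_card_flagsAt_eq_add_nf, ← nf_eq_two_mul_card_edg]

theorem Trivalent.three_mul_nv_le {Γ : MarkedGraph N} (htri : Γ.Trivalent) :
    3 * Γ.nv ≤ 2 * ∑ v, Γ.γ v + ∑ v, (Γ.flagsAt v).card := by
  calc 3 * Γ.nv = ∑ _v : Fin Γ.nv, 3 := by simp [mul_comm]
    _ ≤ ∑ v, (2 * Γ.γ v + (Γ.flagsAt v).card) := Finset.sum_le_sum fun v _ => htri v
    _ = 2 * ∑ v, Γ.γ v + ∑ v, (Γ.flagsAt v).card := by
      rw [Finset.sum_add_distrib, Finset.mul_sum]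

end MarkedGraph

theorem stmt_12_general (g N : ℕ) (Γ : MarkedGraph N)
    (htri : Γ.Trivalent) (hgen : Γ.HasGenus g) :
    (Γ.nv : ℤ) ≤ 2 * ((g : ℤ) - 1) + N ∧
    (Γ.Edg.card : ℤ) ≤ 3 * ((g : ℤ) - 1) + N ∧
    (∑ v : Fin Γ.nv, (((Γ.γ v : ℤ) - 1) + ((Γ.flagsAt v).card : ℤ))) ≤
      4 * ((g : ℤ) - 1) + 2 * N := by
  have hflags : ∑ v, ((Γ.flagsAt v).card : ℤ) = N + 2 * Γ.Edg.card := by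
    exact_mod_cast Γ.sum_card_flagsAt
  have hval : 3 * (Γ.nv : ℤ) ≤ 2 * ∑ v, (Γ.γ v : ℤ) + ∑ v, ((Γ.flagsAt v).card : ℤ) := by
    exact_mod_cast htri.three_mul_nv_le
  have hgenus_nonneg : 0 ≤ ∑ v, (Γ.γ v : ℤ) := by positivity
  have hsum : ∑ v, (((Γ.γ v : ℤ) - 1) + ((Γ.flagsAt v).card : ℤ)) =
      ∑ v, (Γ.γ v : ℤ) - Γ.nv + ∑ v, ((Γ.flagsAt v).card : ℤ) := by
    simp [Finset.sum_add_distrib, Finset.sum_sub_distrib]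
  rw [MarkedGraph.HasGenus] at hgen
  refine ⟨by linarith, by linarith, by linarith⟩

/-- For a connected trivalent `N`-marked graph `Γ` of genus `g` (with `2g+N ≥ 3`):
`|Ver| ≤ 2(g−1)+N`, `|Edg| ≤ 3(g−1)+N`, and
`Σ_{v∈Ver} ((γ(v)−1) + |F̄_v(Γ)|) ≤ 4(g−1)+2N`. -/
theorem stmt_12 (g N : ℕ) (hgN : 3 ≤ 2 * g + N) (Γ : MarkedGraph N)
    (hconn : Γ.Connected) (htri : Γ.Trivalent) (hgen : Γ.HasGenus g) :
    (Γ.nv : ℤ) ≤ 2 * ((g : ℤ) - 1) + N ∧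
    (Γ.Edg.card : ℤ) ≤ 3 * ((g : ℤ) - 1) + N ∧
    (∑ v : Fin Γ.nv, (((Γ.γ v : ℤ) - 1) + ((Γ.flagsAt v).card : ℤ))) ≤
      4 * ((g : ℤ) - 1) + 2 * N :=
  stmt_12_general g N Γ htri hgen
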